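/- Let m ≥ 1, r > 0, β ≥ 1, and let τ : ℝ^m → ℝ be Lipschitz with Lipschitz constant Lip(τ) and satisfy 1/β ≤ τ ≤ β. Then for every f ∈ L²(ℝ^m): ∫_{ℝ^m} τ(x) (Λ_r f)(x)² dx ≤ (1 + Lip(τ) β r) ∫_{ℝ^m} τ(x) f(x)² dx. -/

import Mathlib

/-!
Since `k_r(x, ·)` is a probability density, Jensen's inequality gives
`(Λ_r f)(x)² ≤ ∫ k_r(x,y) f(y)² dy`. Integrating against `τ` and exchanging the integrals
leaves the weights `∫ τ(x) k_r(x,y) dx`. As `k_r` is symmetric, `k_r(·, y)` is also a probability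
density, supported in the ball of radius `r` around `y`, so this weight is at most
`τ(y) + Lip(τ) r ≤ (1 + Lip(τ) β r) τ(y)`, the last step because `β τ(y) ≥ 1`.
-/

open MeasureTheory

/-- The Lebesgue volume of the unit ball in `ℝ^m`. -/
noncomputable def unitBallVol (m : ℕ) : ℝ :=
  (volume (Metric.ball (0 : EuclideanSpace ℝ (Fin m)) 1)).toReal

/-- The profile `ψ(t) = ((m+2)/(2ν_m))(1 − t²)` for `0 ≤ t ≤ 1`, and `0` for `t > 1`. -/
noncomputable def smoothPsi (m : ℕ) (t : ℝ) : ℝ :=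
  if t ≤ 1 then (((m : ℝ) + 2) / (2 * unitBallVol m)) * (1 - t ^ 2) else 0

/-- The smoothing kernel `k_r(x,y) = r^{−m} ψ(|x−y|/r)`. -/
noncomputable def smoothKernel (m : ℕ) (r : ℝ) (x y : EuclideanSpace ℝ (Fin m)) : ℝ :=
  (r ^ m)⁻¹ * smoothPsi m (dist x y / r)

/-- The smoothing operator `Λ_r f(x) = ∫ k_r(x,y) f(y) dy`. -/
noncomputable def smoothOp (m : ℕ) (r : ℝ) (f : EuclideanSpace ℝ (Fin m) → ℝ)
    (x : EuclideanSpace ℝ (Fin m)) : ℝ :=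
  ∫ y, smoothKernel m r x y * f y

section Kernel

variable {X : Type*} [MeasurableSpace X] {μ : Measure X}

theorem sq_integral_mul_le_integral_mul_sq {w f : X → ℝ} (hw : ∀ x, 0 ≤ w x)
    (hw_one : ∫ x, w x ∂μ = 1) (hwf : Integrable (fun x => w x * f x ^ 2) μ) :
    (∫ x, w x * f x ∂μ) ^ 2 ≤ ∫ x, w x * f x ^ 2 ∂μ := by
  have hwf_nonneg : 0 ≤ ∫ x, w x * f x ^ 2 ∂μ :=
    integral_nonneg fun x => mul_nonneg (hw x) (sq_nonneg _)
  by_cases hwf' : Integrable (fun x => w x * f x) μ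
  swap
  · rwa [integral_undef hwf', zero_pow two_ne_zero]
  set c := ∫ x, w x * f x ∂μ
  have hw_int : Integrable w μ := .of_integral_ne_zero (by rw [hw_one]; exact one_ne_zero)
  -- the variance of `f` under the probability density `w`
  have hvar : 0 ≤ ∫ x, w x * (f x - c) ^ 2 ∂μ :=
    integral_nonneg fun x => mul_nonneg (hw x) (sq_nonneg _)
  have hexpand : ∫ x, w x * (f x - c) ^ 2 ∂μ = ∫ x, w x * f x ^ 2 ∂μ - c ^ 2 := by
    have hpoly : (fun x => w x * (f x - c) ^ 2)
        = fun x => w x * f x ^ 2 - 2 * c * (w x * f x) + c ^ 2 * w x := by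
      ext x; ring
    have hlin : Integrable (fun x => w x * f x ^ 2 - 2 * c * (w x * f x)) μ :=
      hwf.sub (hwf'.const_mul _)
    rw [hpoly, integral_add hlin (hw_int.const_mul _), integral_sub hwf (hwf'.const_mul _),
      integral_const_mul, integral_const_mul, hw_one]
    ring
  linarith

variable [SFinite μ] {k : X → X → ℝ} {τ f : X → ℝ} {c : ℝ}

theorem integral_mul_sq_integral_kernel_le (hk : ∀ x y, 0 ≤ k x y)
    (hk_meas : AEStronglyMeasurable (Function.uncurry k) (μ.prod μ)) (hτ : ∀ x, 0 ≤ τ x)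
    (hτ_meas : AEStronglyMeasurable τ μ) (hf : AEStronglyMeasurable f μ)
    (hk_one : ∀ x, ∫ y, k x y ∂μ = 1) (hkf : ∀ x, Integrable (fun y => k x y * f y ^ 2) μ)
    (hτk : ∀ y, Integrable (fun x => τ x * k x y) μ)
    (hτk_le : ∀ y, ∫ x, τ x * k x y ∂μ ≤ c * τ y)
    (hτf : Integrable (fun y => τ y * f y ^ 2) μ) :
    ∫ x, τ x * (∫ y, k x y * f y ∂μ) ^ 2 ∂μ ≤ c * ∫ y, τ y * f y ^ 2 ∂μ := by
  set F : X → X → ℝ := fun x y => τ x * (k x y * f y ^ 2)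
  have hF_nonneg : ∀ x y, 0 ≤ F x y := fun x y =>
    mul_nonneg (hτ x) (mul_nonneg (hk x y) (sq_nonneg _))
  have hF_col : ∀ y, ∫ x, F x y ∂μ = (∫ x, τ x * k x y ∂μ) * f y ^ 2 := fun y => by
    simp only [F, ← mul_assoc]
    exact integral_mul_const _ _
  have hF_col_le : ∀ y, ∫ x, F x y ∂μ ≤ c * (τ y * f y ^ 2) := fun y => by
    rw [hF_col, ← mul_assoc]
    exact mul_le_mul_of_nonneg_right (hτk_le y) (sq_nonneg _)
  have hF_meas : AEStronglyMeasurable (Function.uncurry F) (μ.prod μ) :=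
    hτ_meas.comp_fst.mul (hk_meas.mul (hf.comp_snd.pow 2))
  have hF : Integrable (Function.uncurry F) (μ.prod μ) := by
    refine (integrable_prod_iff' hF_meas).2 ⟨ae_of_all _ fun y => ?_, ?_⟩
    · simpa only [Function.uncurry_apply_pair, F, ← mul_assoc] using (hτk y).mul_const (f y ^ 2)
    · refine (hτf.const_mul c).mono' hF_meas.norm.prod_swap.integral_prod_right'
        (ae_of_all _ fun y => ?_)
      simp only [Function.uncurry_apply_pair, Real.norm_of_nonneg (hF_nonneg _ _)]
      rw [Real.norm_of_nonneg (integral_nonneg fun x => hF_nonneg x y)]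
      exact hF_col_le y
  calc ∫ x, τ x * (∫ y, k x y * f y ∂μ) ^ 2 ∂μ
      ≤ ∫ x, ∫ y, F x y ∂μ ∂μ := by
        refine integral_mono_of_nonneg (ae_of_all _ fun x => mul_nonneg (hτ x) (sq_nonneg _))
          hF.integral_prod_left (ae_of_all _ fun x => ?_)
        change τ x * _ ≤ ∫ y, τ x * (k x y * f y ^ 2) ∂μ
        rw [integral_const_mul]
        exact mul_le_mul_of_nonneg_left
          (sq_integral_mul_le_integral_mul_sq (hk x) (hk_one x) (hkf x)) (hτ x)
    _ = ∫ y, ∫ x, F x y ∂μ ∂μ := integral_integral_swap hF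
    _ ≤ ∫ y, c * (τ y * f y ^ 2) ∂μ :=
        integral_mono_of_nonneg (ae_of_all _ fun y => integral_nonneg fun x => hF_nonneg x y)
          (hτf.const_mul c) (ae_of_all _ hF_col_le)
    _ = c * ∫ y, τ y * f y ^ 2 ∂μ := integral_const_mul _ _

end Kernel

section Lipschitz

variable {X : Type*} [PseudoMetricSpace X] {k : X → X → ℝ} {τ : X → ℝ} {L : NNReal} {r : ℝ}

theorem LipschitzWith.abs_sub_mul_kernel_le (hτ : LipschitzWith L τ) (hk : ∀ x y, 0 ≤ k x y)
    (hk_supp : ∀ x y, r < dist x y → k x y = 0) (x y : X) :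
    |τ x - τ y| * k x y ≤ L * r * k x y := by
  by_cases hxy : dist x y ≤ r
  · refine mul_le_mul_of_nonneg_right ?_ (hk x y)
    calc |τ x - τ y| ≤ L * dist x y := by simpa only [Real.dist_eq] using hτ.dist_le_mul x y
      _ ≤ L * r := mul_le_mul_of_nonneg_left hxy L.coe_nonneg
  · simp [hk_supp x y (not_le.1 hxy)]

variable [MeasurableSpace X] [OpensMeasurableSpace X] {μ : Measure X}

theorem LipschitzWith.integrable_mul_kernel (hτ : LipschitzWith L τ)
    (hk : ∀ x y, 0 ≤ k x y) (hk_supp : ∀ x y, r < dist x y → k x y = 0) {y : X}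
    (hky : Integrable (fun x => k x y) μ) : Integrable (fun x => τ x * k x y) μ := by
  refine (hky.const_mul (|τ y| + L * r)).mono' (hτ.continuous.aestronglyMeasurable.mul hky.1)
    (ae_of_all _ fun x => ?_)
  have hosc := hτ.abs_sub_mul_kernel_le hk hk_supp x y
  have habs : |τ x| * k x y ≤ (|τ y| + |τ x - τ y|) * k x y :=
    mul_le_mul_of_nonneg_right (by linarith [abs_sub_abs_le_abs_sub (τ x) (τ y)]) (hk x y)
  rw [norm_mul, Real.norm_of_nonneg (hk x y), Real.norm_eq_abs]
  linarith

theorem LipschitzWith.integral_mul_kernel_le (hτ : LipschitzWith L τ)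
    (hk : ∀ x y, 0 ≤ k x y) (hk_supp : ∀ x y, r < dist x y → k x y = 0) {y : X}
    (hk_one : ∫ x, k x y ∂μ = 1) : ∫ x, τ x * k x y ∂μ ≤ τ y + L * r := by
  have hky : Integrable (fun x => k x y) μ :=
    .of_integral_ne_zero (by rw [hk_one]; exact one_ne_zero)
  calc ∫ x, τ x * k x y ∂μ ≤ ∫ x, (τ y + L * r) * k x y ∂μ := by
        refine integral_mono (hτ.integrable_mul_kernel hk hk_supp hky) (hky.const_mul _)
          fun x => ?_
        have hosc := hτ.abs_sub_mul_kernel_le hk hk_supp x y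
        have hsub : (τ x - τ y) * k x y ≤ |τ x - τ y| * k x y :=
          mul_le_mul_of_nonneg_right (le_abs_self _) (hk x y)
        linarith
    _ = τ y + L * r := by rw [integral_const_mul, hk_one, mul_one]

end Lipschitz

section SmoothingKernel

variable {m : ℕ} {r : ℝ}

theorem unitBallVol_pos (m : ℕ) : 0 < unitBallVol m :=
  ENNReal.toReal_pos (Metric.measure_ball_pos volume 0 one_pos).ne' measure_ball_lt_top.ne

theorem smoothPsi_of_le_one {t : ℝ} (ht : t ≤ 1) :
    smoothPsi m t = ((m : ℝ) + 2) / (2 * unitBallVol m) * (1 - t ^ 2) :=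
  if_pos ht

theorem smoothPsi_of_one_lt {t : ℝ} (ht : 1 < t) : smoothPsi m t = 0 :=
  if_neg (not_le.2 ht)

theorem smoothPsi_nonneg {t : ℝ} (ht : 0 ≤ t) : 0 ≤ smoothPsi m t := by
  have hC : 0 ≤ ((m : ℝ) + 2) / (2 * unitBallVol m) := by have := unitBallVol_pos m; positivity
  rcases le_or_gt t 1 with ht1 | ht1
  · rw [smoothPsi_of_le_one ht1]
    exact mul_nonneg hC (by nlinarith)
  · rw [smoothPsi_of_one_lt ht1]

theorem smoothPsi_le_smoothPsi_zero (t : ℝ) : smoothPsi m t ≤ smoothPsi m 0 := by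
  have hC : 0 ≤ ((m : ℝ) + 2) / (2 * unitBallVol m) := by have := unitBallVol_pos m; positivity
  rw [smoothPsi_of_le_one zero_le_one]
  rcases le_or_gt t 1 with ht1 | ht1
  · rw [smoothPsi_of_le_one ht1]
    exact mul_le_mul_of_nonneg_left (by nlinarith) hC
  · rw [smoothPsi_of_one_lt ht1]
    positivity

theorem measurable_smoothPsi : Measurable (smoothPsi m) :=
  Measurable.ite measurableSet_Iic (by fun_prop) measurable_const

theorem integral_Ioi_pow_mul_smoothPsi (hm : 1 ≤ m) :
    ∫ t in Set.Ioi 0, t ^ (m - 1) * smoothPsi m t = (m * unitBallVol m)⁻¹ := by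
  set C := ((m : ℝ) + 2) / (2 * unitBallVol m)
  rw [setIntegral_eq_of_subset_of_forall_sdiff_eq_zero measurableSet_Ioi Set.Ioc_subset_Ioi_self
      fun t ht => by rw [smoothPsi_of_one_lt (lt_of_not_ge fun h => ht.2 ⟨ht.1, h⟩), mul_zero],
    ← intervalIntegral.integral_of_le zero_le_one]
  have hpoly : ∀ t ∈ Set.uIcc (0 : ℝ) 1,
      t ^ (m - 1) * smoothPsi m t = C * (t ^ (m - 1) - t ^ (m + 1)) := fun t ht => by
    rw [smoothPsi_of_le_one (Set.uIcc_of_le (zero_le_one : (0 : ℝ) ≤ 1) ▸ ht).2,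
      show m + 1 = m - 1 + 2 by omega, pow_add]
    ring
  rw [intervalIntegral.integral_congr hpoly, intervalIntegral.integral_const_mul,
    intervalIntegral.integral_sub (intervalIntegral.intervalIntegrable_pow _)
      (intervalIntegral.intervalIntegrable_pow _), integral_pow, integral_pow,
    Nat.cast_sub hm, Nat.cast_add]
  simp only [C, one_pow, zero_pow (Nat.succ_ne_zero _), sub_zero, Nat.cast_one, sub_add_cancel]
  field_simp
  ring

theorem smoothKernel_nonneg (hr : 0 ≤ r) (x y : EuclideanSpace ℝ (Fin m)) :
    0 ≤ smoothKernel m r x y :=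
  mul_nonneg (by positivity) (smoothPsi_nonneg (by positivity))

theorem smoothKernel_le (hr : 0 ≤ r) (x y : EuclideanSpace ℝ (Fin m)) :
    smoothKernel m r x y ≤ (r ^ m)⁻¹ * smoothPsi m 0 :=
  mul_le_mul_of_nonneg_left (smoothPsi_le_smoothPsi_zero _) (by positivity)

theorem smoothKernel_eq_zero_of_lt_dist (hr : 0 < r) {x y : EuclideanSpace ℝ (Fin m)}
    (hxy : r < dist x y) : smoothKernel m r x y = 0 := by
  rw [smoothKernel, smoothPsi_of_one_lt ((one_lt_div hr).2 hxy), mul_zero]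

theorem smoothKernel_comm (x y : EuclideanSpace ℝ (Fin m)) :
    smoothKernel m r x y = smoothKernel m r y x := by
  rw [smoothKernel, smoothKernel, dist_comm]

theorem measurable_smoothKernel : Measurable (Function.uncurry (smoothKernel m r)) :=
  measurable_const.mul (measurable_smoothPsi.comp (continuous_dist.measurable.div_const r))

theorem integral_smoothKernel (hm : 1 ≤ m) (hr : 0 < r) (x : EuclideanSpace ℝ (Fin m)) :
    ∫ y, smoothKernel m r x y = 1 := by
  have : Nonempty (Fin m) := ⟨⟨0, hm⟩⟩
  have hscale : ∀ y, dist x y / r = ‖r⁻¹ • (y - x)‖ := fun y => by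
    rw [norm_smul, Real.norm_of_nonneg (inv_nonneg.2 hr.le), dist_comm, dist_eq_norm,
      div_eq_inv_mul]
  simp only [smoothKernel, hscale]
  rw [integral_const_mul, integral_sub_right_eq_self (fun z => smoothPsi m ‖r⁻¹ • z‖) x,
    Measure.integral_comp_inv_smul_of_nonneg volume (fun z => smoothPsi m ‖z‖) hr.le,
    integral_fun_norm_addHaar volume (smoothPsi m), finrank_euclideanSpace_fin]
  simp only [smul_eq_mul, nsmul_eq_mul]
  rw [integral_Ioi_pow_mul_smoothPsi hm]
  change (r ^ m)⁻¹ * (r ^ m * (m * (unitBallVol m * (m * unitBallVol m)⁻¹))) = 1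
  have hν := (unitBallVol_pos m).ne'
  field_simp

theorem integral_smoothKernel_left (hm : 1 ≤ m) (hr : 0 < r) (y : EuclideanSpace ℝ (Fin m)) :
    ∫ x, smoothKernel m r x y = 1 := by
  simp_rw [smoothKernel_comm _ y]
  exact integral_smoothKernel hm hr y

theorem integrable_smoothKernel_mul (hr : 0 ≤ r) (x : EuclideanSpace ℝ (Fin m))
    {g : EuclideanSpace ℝ (Fin m) → ℝ} (hg : Integrable g) :
    Integrable (fun y => smoothKernel m r x y * g y) :=
  hg.bdd_mul measurable_smoothKernel.of_uncurry_left.aestronglyMeasurable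
    (ae_of_all _ fun y => (Real.norm_of_nonneg (smoothKernel_nonneg hr x y)).trans_le
      (smoothKernel_le hr x y))

end SmoothingKernel

theorem stmt_13 (m : ℕ) (hm : 1 ≤ m) (r : ℝ) (hr : 0 < r) (β : ℝ) (hβ : 1 ≤ β)
    (τ : EuclideanSpace ℝ (Fin m) → ℝ) (L : NNReal) (hτLip : LipschitzWith L τ)
    (hτlb : ∀ x, 1 / β ≤ τ x) (hτub : ∀ x, τ x ≤ β)
    (f : EuclideanSpace ℝ (Fin m) → ℝ) (hf : MemLp f 2 volume) :
    ∫ x, τ x * (smoothOp m r f x) ^ 2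
      ≤ (1 + (L : ℝ) * β * r) * ∫ x, τ x * f x ^ 2 := by
  have hβ0 : 0 < β := by linarith
  have hτ0 : ∀ x, 0 ≤ τ x := fun x => (one_div_pos.2 hβ0).le.trans (hτlb x)
  have hk := smoothKernel_nonneg (m := m) hr.le
  have hk_supp : ∀ x y, r < dist x y → smoothKernel m r x y = 0 :=
    fun _ _ => smoothKernel_eq_zero_of_lt_dist hr
  have hτf : Integrable (fun y => τ y * f y ^ 2) :=
    hf.integrable_sq.bdd_mul hτLip.continuous.aestronglyMeasurable
      (ae_of_all _ fun y => (Real.norm_of_nonneg (hτ0 y)).trans_le (hτub y))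
  refine integral_mul_sq_integral_kernel_le hk measurable_smoothKernel.aestronglyMeasurable hτ0
    hτLip.continuous.aestronglyMeasurable hf.1 (integral_smoothKernel hm hr)
    (fun x => integrable_smoothKernel_mul hr.le x hf.integrable_sq)
    (fun y => hτLip.integrable_mul_kernel hk hk_supp
      (.of_integral_ne_zero (by rw [integral_smoothKernel_left hm hr y]; exact one_ne_zero)))
    (fun y => ?_) hτf
  have hβτ : 1 ≤ β * τ y := by
    have := hτlb y
    rwa [div_le_iff₀ hβ0, mul_comm] at this
  calc ∫ x, τ x * smoothKernel m r x y ≤ τ y + L * r :=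
        hτLip.integral_mul_kernel_le hk hk_supp (integral_smoothKernel_left hm hr y)
    _ ≤ (1 + L * β * r) * τ y := by
        nlinarith [mul_le_mul_of_nonneg_left hβτ (mul_nonneg L.coe_nonneg hr.le)]
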